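/- arXiv:1503.00091 — 4 statements merged into one kernel-verified Lean document; each statement's English description precedes it below -/
import Mathlib

section
/- Let G be a finite simple graph and let D be a subset of vertices. Define the weight function ω(v) = |N[v]|. Then D is an efficient dominating set of G if and only if D is an independent set in the square G² with total weight ω(D) = |V(G)|. -/
open SimpleGraph Finset

variable {V : Type*}

/-- The square of a graph `G`: two distinct vertices are adjacent iff
their distance in `G` is 1 or 2. -/
def square (G : SimpleGraph V) : SimpleGraph V where
  Adj u v := u ≠ v ∧ (G.Adj u v ∨ ∃ w, G.Adj u w ∧ G.Adj w v)
  symm := ⟨by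
    rintro u v ⟨h, h2 | ⟨w, hw1, hw2⟩⟩
    · exact ⟨h.symm, Or.inl h2.symm⟩
    · exact ⟨h.symm, Or.inr ⟨w, hw2.symm, hw1.symm⟩⟩⟩
  loopless := ⟨by rintro u ⟨h, _⟩; exact h rfl⟩

/-- `D` is an efficient dominating set of `G`: every vertex is dominated
(by closed neighborhoods) by exactly one vertex of `D`. -/
def IsEDS (G : SimpleGraph V) (D : Set V) : Prop :=
  ∀ v : V, ∃! d : V, d ∈ D ∧ (d = v ∨ G.Adj d v)

/-- `G` has no induced subgraph isomorphic to `H`. -/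
def Free {W : Type*} (G : SimpleGraph V) (H : SimpleGraph W) : Prop :=
  IsEmpty (H ↪g G)

/-- The house: the complement of the path on five vertices. -/
def house : SimpleGraph (Fin 5) := (pathGraph 5)ᶜ

/-- The domino: a `P₅` `x₁ … x₅` together with a vertex adjacent to `x₁, x₃, x₅`. -/
def domino : SimpleGraph (Fin 6) :=
  SimpleGraph.fromRel (fun i j =>
    (i, j) ∈ [((0 : Fin 6), (1 : Fin 6)), (1, 2), (2, 3), (3, 4), (5, 0), (5, 2), (5, 4)])

/-- A graph is hole-free if it contains no induced cycle `C_k`, `k ≥ 5`. -/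
def HoleFree (G : SimpleGraph V) : Prop := ∀ k, 5 ≤ k → _root_.Free G (cycleGraph k)

/-- A graph is chordal if it contains no induced cycle `C_k`, `k ≥ 4`. -/
def Chordal (G : SimpleGraph V) : Prop := ∀ k, 4 ≤ k → _root_.Free G (cycleGraph k)

/-! D is an efficient dominating set exactly when the closed neighbourhoods `N[d]`, `d ∈ D`,
partition the vertex set. Two distinct vertices are adjacent in `G²` iff their closed
neighbourhoods meet, so independence in `G²` is pairwise disjointness of the `N[d]`; and a
pairwise disjoint family covers `V` iff its sizes add up to `|V|`. -/

theorem Finset.forall_existsUnique_mem_iff {ι α : Type*} [DecidableEq α] (s : Finset ι)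
    (t : ι → Finset α) :
    (∀ a, ∃! i, i ∈ s ∧ a ∈ t i) ↔
      (s : Set ι).PairwiseDisjoint t ∧ ∀ a, a ∈ s.biUnion t := by
  constructor
  · intro h
    refine ⟨fun i hi j hj hij => disjoint_left.mpr fun a hai haj => ?_, fun a => ?_⟩
    · exact hij ((h a).unique ⟨hi, hai⟩ ⟨hj, haj⟩)
    · obtain ⟨i, ⟨hi, hai⟩, -⟩ := h a
      exact mem_biUnion.mpr ⟨i, hi, hai⟩
  · rintro ⟨hdisj, hcover⟩ a
    obtain ⟨i, hi, hai⟩ := mem_biUnion.mp (hcover a)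
    refine ⟨i, ⟨hi, hai⟩, fun j ⟨hj, haj⟩ => ?_⟩
    by_contra hji
    exact disjoint_left.mp (hdisj hj hi hji) haj hai

theorem Finset.biUnion_eq_univ_iff_sum_card_eq {ι α : Type*} [DecidableEq α] [Fintype α]
    {s : Finset ι} {t : ι → Finset α} (h : (s : Set ι).PairwiseDisjoint t) :
    s.biUnion t = univ ↔ ∑ i ∈ s, #(t i) = Fintype.card α := by
  rw [← card_biUnion h, card_eq_iff_eq_univ]

namespace SimpleGraph

variable [DecidableEq V] (G : SimpleGraph V) [G.LocallyFinite]

def closedNeighborFinset (v : V) : Finset V := insert v (G.neighborFinset v)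

variable {G}

@[simp]
theorem mem_closedNeighborFinset {u v : V} :
    v ∈ G.closedNeighborFinset u ↔ u = v ∨ G.Adj u v := by
  simp [closedNeighborFinset, eq_comm]

theorem square_adj_iff_not_disjoint {u v : V} (huv : u ≠ v) :
    (square G).Adj u v ↔ ¬ Disjoint (G.closedNeighborFinset u) (G.closedNeighborFinset v) := by
  simp only [square, not_disjoint_iff, mem_closedNeighborFinset]
  constructor
  · rintro ⟨-, hadj | ⟨w, huw, hwv⟩⟩
    · exact ⟨v, Or.inr hadj, Or.inl rfl⟩
    · exact ⟨w, Or.inr huw, Or.inr hwv.symm⟩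
  · rintro ⟨w, rfl | huw, rfl | hvw⟩
    · exact absurd rfl huv
    · exact ⟨huv, Or.inl hvw.symm⟩
    · exact ⟨huv, Or.inl huw⟩
    · exact ⟨huv, Or.inr ⟨w, huw, hvw.symm⟩⟩

theorem isEDS_iff_pairwiseDisjoint_and_biUnion_eq_univ [Fintype V] (D : Finset V) :
    IsEDS G D ↔
      (D : Set V).PairwiseDisjoint G.closedNeighborFinset ∧
        D.biUnion G.closedNeighborFinset = univ := by
  simp only [IsEDS, mem_coe, ← mem_closedNeighborFinset, eq_univ_iff_forall]
  exact forall_existsUnique_mem_iff D _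

theorem pairwiseDisjoint_closedNeighborFinset_iff (D : Finset V) :
    (D : Set V).PairwiseDisjoint G.closedNeighborFinset ↔
      ∀ u ∈ D, ∀ v ∈ D, u ≠ v → ¬ (square G).Adj u v := by
  simp only [Set.PairwiseDisjoint, Set.Pairwise, mem_coe, Function.onFun]
  refine forall₂_congr fun u _ => forall₂_congr fun v _ => forall_congr' fun huv => ?_
  rw [square_adj_iff_not_disjoint huv, not_not]

end SimpleGraph

theorem stmt0 [Fintype V] [DecidableEq V] (G : SimpleGraph V) [DecidableRel G.Adj]
    (D : Finset V) :
    IsEDS G (D : Set V) ↔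
      ((∀ u ∈ D, ∀ v ∈ D, u ≠ v → ¬ (square G).Adj u v) ∧
        ∑ v ∈ D, (insert v (G.neighborFinset v)).card = Fintype.card V) := by
  rw [isEDS_iff_pairwiseDisjoint_and_biUnion_eq_univ, ← pairwiseDisjoint_closedNeighborFinset_iff]
  exact and_congr_right biUnion_eq_univ_iff_sum_card_eq
end

section
/- Let G be a (P₆, house, hole, domino)-free graph with an efficient dominating set D, and suppose G² contains an induced cycle C_k with k ≥ 4 on vertices v₁,...,v_k. Then for all i (indices mod k), the distance in G between v_i and v_{i+1} is exactly 2. -/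
open SimpleGraph Finset

variable {V : Type*}

/-! If two consecutive cycle vertices `b`, `c` were adjacent in `G`, their other cycle
neighbours `a` and `d` would be at distance exactly 2 from them, through midpoints `x` and `y`.
Excluding `P₆`, `C₆` and the domino forces `x ~ y` and `a ≁ d`, so `x b c y` is an induced 4-cycle
with pendant vertices `a` and `d`. The midpoints of the next pairs of the cycle cannot see this
4-cycle without creating a house or a domino, and chasing them around the cycle (separately for
`k = 4`, `k = 5` and `k ≥ 6`) closes an induced `P₆`, house or short hole. -/

section InducedSubgraphs

variable {W : Type*} {G : SimpleGraph V} {H : SimpleGraph W}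

/-- Injectivity of `f` comes for free: vertices with equal images have equal neighbourhoods
in `H`. -/
theorem Free.false_of_adj_iff (hG : _root_.Free G H)
    (hH : ∀ i j, (∀ l, H.Adj i l ↔ H.Adj j l) → i = j)
    (f : W → V) (hf : ∀ i j, G.Adj (f i) (f j) ↔ H.Adj i j) : False :=
  hG.false ⟨⟨f, fun i j hij => hH i j fun l => by rw [← hf, ← hf, hij]⟩, hf _ _⟩

variable {u₀ u₁ u₂ u₃ u₄ u₅ : V}

theorem Free.false_of_path6 (hG : _root_.Free G (pathGraph 6))
    (h01 : G.Adj u₀ u₁) (h12 : G.Adj u₁ u₂) (h23 : G.Adj u₂ u₃) (h34 : G.Adj u₃ u₄)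
    (h45 : G.Adj u₄ u₅) (n02 : ¬G.Adj u₀ u₂) (n03 : ¬G.Adj u₀ u₃) (n04 : ¬G.Adj u₀ u₄)
    (n05 : ¬G.Adj u₀ u₅) (n13 : ¬G.Adj u₁ u₃) (n14 : ¬G.Adj u₁ u₄) (n15 : ¬G.Adj u₁ u₅)
    (n24 : ¬G.Adj u₂ u₄) (n25 : ¬G.Adj u₂ u₅) (n35 : ¬G.Adj u₃ u₅) : False := by
  refine hG.false_of_adj_iff (by simp only [pathGraph_adj]; decide) ![u₀, u₁, u₂, u₃, u₄, u₅] ?_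
  intro i j
  fin_cases i <;> fin_cases j <;> simp_all [pathGraph_adj, G.adj_comm]

theorem Free.false_of_cycle5 (hG : _root_.Free G (cycleGraph 5))
    (h01 : G.Adj u₀ u₁) (h12 : G.Adj u₁ u₂) (h23 : G.Adj u₂ u₃) (h34 : G.Adj u₃ u₄)
    (h40 : G.Adj u₄ u₀) (n02 : ¬G.Adj u₀ u₂) (n03 : ¬G.Adj u₀ u₃) (n13 : ¬G.Adj u₁ u₃)
    (n14 : ¬G.Adj u₁ u₄) (n24 : ¬G.Adj u₂ u₄) : False := by
  refine hG.false_of_adj_iff (by simp only [cycleGraph_adj']; decide) ![u₀, u₁, u₂, u₃, u₄] ?_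
  intro i j
  fin_cases i <;> fin_cases j <;> simp_all [cycleGraph_adj', G.adj_comm] <;> decide

theorem Free.false_of_cycle6 (hG : _root_.Free G (cycleGraph 6))
    (h01 : G.Adj u₀ u₁) (h12 : G.Adj u₁ u₂) (h23 : G.Adj u₂ u₃) (h34 : G.Adj u₃ u₄)
    (h45 : G.Adj u₄ u₅) (h50 : G.Adj u₅ u₀) (n02 : ¬G.Adj u₀ u₂) (n03 : ¬G.Adj u₀ u₃)
    (n04 : ¬G.Adj u₀ u₄) (n13 : ¬G.Adj u₁ u₃) (n14 : ¬G.Adj u₁ u₄) (n15 : ¬G.Adj u₁ u₅)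
    (n24 : ¬G.Adj u₂ u₄) (n25 : ¬G.Adj u₂ u₅) (n35 : ¬G.Adj u₃ u₅) : False := by
  refine hG.false_of_adj_iff (by simp only [cycleGraph_adj']; decide) ![u₀, u₁, u₂, u₃, u₄, u₅] ?_
  intro i j
  fin_cases i <;> fin_cases j <;> simp_all [cycleGraph_adj', G.adj_comm] <;> decide

/-- The house as a 4-cycle `u₀u₁u₂u₃` with a roof vertex `r` over the edge `u₀u₁`. -/
theorem Free.false_of_house (hG : _root_.Free G house) {r : V}
    (h01 : G.Adj u₀ u₁) (h12 : G.Adj u₁ u₂) (h23 : G.Adj u₂ u₃) (h30 : G.Adj u₃ u₀)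
    (hr0 : G.Adj r u₀) (hr1 : G.Adj r u₁) (n02 : ¬G.Adj u₀ u₂) (n13 : ¬G.Adj u₁ u₃)
    (nr2 : ¬G.Adj r u₂) (nr3 : ¬G.Adj r u₃) : False := by
  refine hG.false_of_adj_iff (by simp only [house, compl_adj, pathGraph_adj]; decide)
    ![u₀, u₂, r, u₃, u₁] ?_
  intro i j
  fin_cases i <;> fin_cases j <;> simp_all [house, pathGraph_adj, G.adj_comm]

/-- The domino as a 6-cycle `u₀ … u₅` with the chord `u₂u₅`. -/
theorem Free.false_of_domino (hG : _root_.Free G domino)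
    (h01 : G.Adj u₀ u₁) (h12 : G.Adj u₁ u₂) (h23 : G.Adj u₂ u₃) (h34 : G.Adj u₃ u₄)
    (h45 : G.Adj u₄ u₅) (h50 : G.Adj u₅ u₀) (h25 : G.Adj u₂ u₅) (n02 : ¬G.Adj u₀ u₂)
    (n03 : ¬G.Adj u₀ u₃) (n04 : ¬G.Adj u₀ u₄) (n13 : ¬G.Adj u₁ u₃) (n14 : ¬G.Adj u₁ u₄)
    (n15 : ¬G.Adj u₁ u₅) (n24 : ¬G.Adj u₂ u₄) (n35 : ¬G.Adj u₃ u₅) : False := by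
  refine hG.false_of_adj_iff ?_ ![u₀, u₁, u₂, u₃, u₄, u₅] ?_
  · set_option synthInstance.maxSize 2000 in
    simp only [domino, fromRel_adj, List.mem_cons, List.mem_nil_iff, Prod.mk.injEq, or_false]
    decide
  intro i j
  fin_cases i <;> fin_cases j <;> simp_all [domino, G.adj_comm]

end InducedSubgraphs

structure IsP6HouseHoleDominoFree (G : SimpleGraph V) : Prop where
  path6_free : _root_.Free G (pathGraph 6)
  house_free : _root_.Free G house
  hole_free : HoleFree G
  domino_free : _root_.Free G domino

/-- `x b c y` is an induced 4-cycle and `a` hangs off `x`. -/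
theorem IsP6HouseHoleDominoFree.not_adj_of_adj_pendant {G : SimpleGraph V}
    (hG : IsP6HouseHoleDominoFree G) {a x b c y m : V}
    (hax : G.Adj a x) (hxb : G.Adj x b) (hbc : G.Adj b c) (hcy : G.Adj c y) (hxy : G.Adj x y)
    (nab : ¬G.Adj a b) (nac : ¬G.Adj a c) (nay : ¬G.Adj a y) (nxc : ¬G.Adj x c)
    (nby : ¬G.Adj b y) (hma : G.Adj m a) (nmb : ¬G.Adj m b) (nmc : ¬G.Adj m c) :
    ¬G.Adj m y := by
  intro hmy
  by_cases hmx : G.Adj m x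
  · exact hG.house_free.false_of_house hxy hcy.symm hbc.symm hxb.symm hmx hmy nxc
      (nby ∘ Adj.symm) nmc nmb
  · exact hG.domino_free.false_of_domino hma hax hxb hbc hcy hmy.symm hxy
      hmx nmb nmc nab nac nay nxc nby

theorem ZMod.intCast_ne_zero_of_pos_of_lt {k : ℕ} {t : ℤ} (h0 : 0 < t) (hk : t < k) :
    (t : ZMod k) ≠ 0 := by
  rw [Ne, ZMod.intCast_zmod_eq_zero_iff_dvd]
  exact fun h => (Int.le_of_dvd h0 h).not_gt hk

/-- An induced cycle of length `k` in `square G`, unrolled to a `k`-periodic sequence on `ℤ`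
so that all index arithmetic is linear and decided by `omega`. -/
structure IsInducedSquareCycle (G : SimpleGraph V) (k : ℕ) (w : ℤ → V) : Prop where
  periodic : ∀ i, w (i + k) = w i
  square_adj : ∀ i, (square G).Adj (w i) (w (i + 1))
  far : ∀ i j : ℤ, 2 ≤ j - i → j - i + 2 ≤ k →
    ¬G.Adj (w i) (w j) ∧ ∀ z, G.Adj (w i) z → ¬G.Adj z (w j)

namespace IsInducedSquareCycle

variable {G : SimpleGraph V} {k : ℕ} {w : ℤ → V}

theorem of_zmod {v : ZMod k → V} (hinj : Function.Injective v)
    (hadj : ∀ i : ZMod k, (square G).Adj (v i) (v (i + 1)))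
    (hnon : ∀ i j : ZMod k, j ≠ i - 1 → j ≠ i → j ≠ i + 1 → ¬ (square G).Adj (v i) (v j))
    (p : ZMod k) : IsInducedSquareCycle G k (fun i => v (p + i)) where
  periodic i := by simp
  square_adj i := by simpa [add_assoc] using hadj (p + i)
  far i j h2 hk := by
    have hne (c : ℤ) (h0 : 0 < j - i - c) (hk : j - i - c < k) : p + (j : ZMod k) ≠ p + i + c := by
      intro h
      apply ZMod.intCast_ne_zero_of_pos_of_lt h0 hk
      push_cast
      linear_combination h
    have hfar := hnon (p + i) (p + j)
      (by simpa [sub_eq_add_neg] using hne (-1) (by omega) (by omega))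
      (by simpa using hne 0 (by omega) (by omega)) (by simpa using hne 1 (by omega) (by omega))
    have hvne : v (p + i) ≠ v (p + j) := hinj.ne (by simpa using (hne 0 (by omega) (by omega)).symm)
    exact ⟨fun h => hfar ⟨hvne, .inl h⟩, fun z h1 h2 => hfar ⟨hvne, .inr ⟨z, h1, h2⟩⟩⟩

theorem shift (S : IsInducedSquareCycle G k w) (n : ℤ) :
    IsInducedSquareCycle G k (fun i => w (i + n)) where
  periodic i := by simpa [add_right_comm] using S.periodic (i + n)
  square_adj i := by simpa [add_right_comm] using S.square_adj (i + n)
  far i j h2 hk := S.far (i + n) (j + n) (by omega) (by omega)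

theorem exists_adj_adj (S : IsInducedSquareCycle G k w) {i j : ℤ} (hij : j = i + 1)
    (h : ¬G.Adj (w i) (w j)) : ∃ z, G.Adj (w i) z ∧ G.Adj z (w j) :=
  ((hij ▸ S.square_adj i).2).resolve_left h

theorem exists_adj_midpoints (hG : IsP6HouseHoleDominoFree G) (S : IsInducedSquareCycle G k w)
    (hk : 4 ≤ k) (hbc : G.Adj (w 0) (w 1)) :
    ∃ x y, G.Adj (w (-1)) x ∧ G.Adj x (w 0) ∧ G.Adj (w 1) y ∧ G.Adj y (w 2) ∧ G.Adj x y ∧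
      ¬G.Adj (w (-1)) (w 2) := by
  have far_ac := S.far (-1) 1 (by omega) (by omega)
  have far_bd := S.far 0 2 (by omega) (by omega)
  obtain ⟨x, hax, hxb⟩ := S.exists_adj_adj (i := -1) (by norm_num) fun h => far_ac.2 _ h hbc
  obtain ⟨y, hcy, hyd⟩ := S.exists_adj_adj (i := 1) (by norm_num) fun h => far_bd.2 _ hbc h
  have hxy : G.Adj x y := by
    by_contra hxy
    by_cases had : G.Adj (w (-1)) (w 2)
    · refine (hG.hole_free 6 (by norm_num)).false_of_cycle6 hax hxb hbc hcy hyd had.symm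
        ?_ ?_ ?_ ?_ ?_ ?_ ?_ ?_ ?_ <;> grind [Adj.symm]
    · refine hG.path6_free.false_of_path6 hax hxb hbc hcy hyd
        ?_ ?_ ?_ ?_ ?_ ?_ ?_ ?_ ?_ ?_ <;> grind [Adj.symm]
  refine ⟨x, y, hax, hxb, hcy, hyd, hxy, fun had => ?_⟩
  refine hG.domino_free.false_of_domino had.symm hax hxb hbc hcy hyd hxy
    ?_ ?_ ?_ ?_ ?_ ?_ ?_ ?_ <;> grind [Adj.symm]

theorem not_adj_of_card_eq_four (hG : IsP6HouseHoleDominoFree G) (S : IsInducedSquareCycle G k w)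
    (hk : k = 4) : ¬G.Adj (w 0) (w 1) := by
  intro hbc
  obtain ⟨x, y, hax, hxb, hcy, hyd, hxy, nad⟩ := S.exists_adj_midpoints hG (by omega) hbc
  have far_ac := S.far (-1) 1 (by omega) (by omega)
  have far_bd := S.far 0 2 (by omega) (by omega)
  have hda : w 3 = w (-1) := by simpa [hk] using S.periodic (-1)
  obtain ⟨m, hdm, hma⟩ :=
    S.exists_adj_adj (i := 2) (j := 3) (by norm_num) (hda ▸ fun h => nad h.symm)
  rw [hda] at hma
  have nmy : ¬G.Adj m y := by
    refine hG.not_adj_of_adj_pendant hax hxb hbc hcy hxy ?_ ?_ ?_ ?_ ?_ hma ?_ ?_ <;>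
      grind [Adj.symm]
  have nmx : ¬G.Adj m x := by
    refine hG.not_adj_of_adj_pendant hyd.symm hcy.symm hbc.symm hxb.symm hxy.symm ?_ ?_ ?_ ?_ ?_
      hdm.symm ?_ ?_ <;> grind [Adj.symm]
  refine (hG.hole_free 5 (by norm_num)).false_of_cycle5 hma hax hxy hyd hdm ?_ ?_ ?_ ?_ ?_ <;>
    grind [Adj.symm]

theorem not_adj_of_card_eq_five (hG : IsP6HouseHoleDominoFree G) (S : IsInducedSquareCycle G k w)
    (hk : k = 5) : ¬G.Adj (w 0) (w 1) := by
  intro hbc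
  obtain ⟨x, y, hax, hxb, hcy, hyd, hxy, -⟩ := S.exists_adj_midpoints hG (by omega) hbc
  have far_ac := S.far (-1) 1 (by omega) (by omega)
  have far_ad := S.far (-1) 2 (by omega) (by omega)
  have far_bd := S.far 0 2 (by omega) (by omega)
  have far_be := S.far 0 3 (by omega) (by omega)
  have far_ce := S.far 1 3 (by omega) (by omega)
  have h4 : w 4 = w (-1) := by simpa [hk] using S.periodic (-1)
  have hsq_ea := h4 ▸ S.square_adj 3
  by_cases hde : G.Adj (w 2) (w 3)
  · obtain ⟨u, heu, hua⟩ := hsq_ea.2.resolve_left fun h => far_ad.2 _ h.symm hde.symm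
    have hyu : G.Adj y u := by
      by_contra nyu
      refine hG.path6_free.false_of_path6 hcy hyd hde heu hua
        ?_ ?_ ?_ ?_ ?_ ?_ ?_ ?_ ?_ ?_ <;> grind [Adj.symm]
    refine hG.not_adj_of_adj_pendant hax hxb hbc hcy hxy ?_ ?_ ?_ ?_ ?_ hua ?_ ?_ hyu.symm <;>
      grind [Adj.symm]
  obtain ⟨q, hdq, hqe⟩ := S.exists_adj_adj (by norm_num) hde
  have nqx : ¬G.Adj q x := by
    refine hG.not_adj_of_adj_pendant hyd.symm hcy.symm hbc.symm hxb.symm hxy.symm ?_ ?_ ?_ ?_ ?_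
      hdq.symm ?_ ?_ <;> grind [Adj.symm]
  by_cases hea : G.Adj (w 3) (w (-1))
  · refine hG.path6_free.false_of_path6 hdq hqe hea hax hxb
      ?_ ?_ ?_ ?_ ?_ ?_ ?_ ?_ ?_ ?_ <;> grind [Adj.symm]
  obtain ⟨u, heu, hua⟩ := hsq_ea.2.resolve_left hea
  have nuy : ¬G.Adj u y := by
    refine hG.not_adj_of_adj_pendant hax hxb hbc hcy hxy ?_ ?_ ?_ ?_ ?_ hua ?_ ?_ <;>
      grind [Adj.symm]
  have hqy : G.Adj q y := by
    by_contra nqy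
    refine hG.path6_free.false_of_path6 hax hxy hyd hdq hqe
      ?_ ?_ ?_ ?_ ?_ ?_ ?_ ?_ ?_ ?_ <;> grind [Adj.symm]
  have hux : G.Adj u x := by
    by_contra nux
    refine hG.path6_free.false_of_path6 hyd.symm hxy.symm hax.symm hua.symm heu.symm
      ?_ ?_ ?_ ?_ ?_ ?_ ?_ ?_ ?_ ?_ <;> grind [Adj.symm]
  by_cases huq : G.Adj u q
  · refine hG.house_free.false_of_house huq.symm hux hxy hqy.symm hqe.symm heu
      ?_ ?_ ?_ ?_ <;> grind [Adj.symm]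
  · refine (hG.hole_free 5 (by norm_num)).false_of_cycle5 heu hux hxy hqy.symm hqe
      ?_ ?_ ?_ ?_ ?_ <;> grind [Adj.symm]

theorem not_adj_two_three_of_adj (hG : IsP6HouseHoleDominoFree G)
    (S : IsInducedSquareCycle G k w) (hk : 6 ≤ k) (hbc : G.Adj (w 0) (w 1)) :
    ¬G.Adj (w 2) (w 3) := by
  intro hde
  obtain ⟨x, y, hax, hxb, hcy, hyd, hxy, -⟩ := S.exists_adj_midpoints hG (by omega) hbc
  have far_fb := S.far (-2) 0 (by omega) (by omega)
  have far_fd := S.far (-2) 2 (by omega) (by omega)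
  have far_ac := S.far (-1) 1 (by omega) (by omega)
  have far_ae := S.far (-1) 3 (by omega) (by omega)
  have far_bd := S.far 0 2 (by omega) (by omega)
  have far_ce := S.far 1 3 (by omega) (by omega)
  by_cases hfa : G.Adj (w (-2)) (w (-1))
  · refine hG.path6_free.false_of_path6 hfa hax hxy hyd hde
      ?_ ?_ ?_ ?_ ?_ ?_ ?_ ?_ ?_ ?_ <;> grind [Adj.symm]
  obtain ⟨m, hfm, hma⟩ := S.exists_adj_adj (by norm_num) hfa
  have nmy : ¬G.Adj m y := by
    refine hG.not_adj_of_adj_pendant hax hxb hbc hcy hxy ?_ ?_ ?_ ?_ ?_ hma ?_ ?_ <;>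
      grind [Adj.symm]
  by_cases hmx : G.Adj m x
  · refine hG.path6_free.false_of_path6 hfm hmx hxy hyd hde
      ?_ ?_ ?_ ?_ ?_ ?_ ?_ ?_ ?_ ?_ <;> grind [Adj.symm]
  · refine hG.path6_free.false_of_path6 hma hax hxy hyd hde
      ?_ ?_ ?_ ?_ ?_ ?_ ?_ ?_ ?_ ?_ <;> grind [Adj.symm]

theorem not_adj_of_six_le_card (hG : IsP6HouseHoleDominoFree G) (S : IsInducedSquareCycle G k w)
    (hk : 6 ≤ k) : ¬G.Adj (w 0) (w 1) := by
  intro hbc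
  obtain ⟨x, y, hax, hxb, hcy, hyd, hxy, nad⟩ := S.exists_adj_midpoints hG (by omega) hbc
  have nde := S.not_adj_two_three_of_adj hG hk hbc
  have nfa : ¬G.Adj (w (-2)) (w (-1)) := fun hfa =>
    (S.shift (-2)).not_adj_two_three_of_adj hG hk (by simpa using hfa) (by simpa using hbc)
  have far_fb := S.far (-2) 0 (by omega) (by omega)
  have far_fd := S.far (-2) 2 (by omega) (by omega)
  have far_ac := S.far (-1) 1 (by omega) (by omega)
  have far_ae := S.far (-1) 3 (by omega) (by omega)
  have far_bd := S.far 0 2 (by omega) (by omega)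
  have far_ce := S.far 1 3 (by omega) (by omega)
  obtain ⟨q, hdq, hqe⟩ := S.exists_adj_adj (by norm_num) nde
  have nqx : ¬G.Adj q x := by
    refine hG.not_adj_of_adj_pendant hyd.symm hcy.symm hbc.symm hxb.symm hxy.symm ?_ ?_ ?_ ?_ ?_
      hdq.symm ?_ ?_ <;> grind [Adj.symm]
  have hqy : G.Adj q y := by
    by_contra nqy
    refine hG.path6_free.false_of_path6 hax hxy hyd hdq hqe
      ?_ ?_ ?_ ?_ ?_ ?_ ?_ ?_ ?_ ?_ <;> grind [Adj.symm]
  obtain ⟨m, hfm, hma⟩ := S.exists_adj_adj (by norm_num) nfa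
  have nmy : ¬G.Adj m y := by
    refine hG.not_adj_of_adj_pendant hax hxb hbc hcy hxy ?_ ?_ ?_ ?_ ?_ hma ?_ ?_ <;>
      grind [Adj.symm]
  have hmx : G.Adj m x := by
    by_contra nmx
    refine hG.path6_free.false_of_path6 hyd.symm hxy.symm hax.symm hma.symm hfm.symm
      ?_ ?_ ?_ ?_ ?_ ?_ ?_ ?_ ?_ ?_ <;> grind [Adj.symm]
  by_cases hmq : G.Adj m q
  · refine hG.house_free.false_of_house hmx hxy hqy.symm hmq.symm hma.symm hax
      ?_ ?_ ?_ ?_ <;> grind [Adj.symm]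
  by_cases hef : G.Adj (w 3) (w (-2))
  · refine hG.path6_free.false_of_path6 hdq hqe hef hfm hma
      ?_ ?_ ?_ ?_ ?_ ?_ ?_ ?_ ?_ ?_ <;> grind [Adj.symm]
  · refine hG.path6_free.false_of_path6 hfm hmx hxy hqy.symm hqe
      ?_ ?_ ?_ ?_ ?_ ?_ ?_ ?_ ?_ ?_ <;> grind [Adj.symm]

theorem not_adj_zero_one (hG : IsP6HouseHoleDominoFree G) (S : IsInducedSquareCycle G k w)
    (hk : 4 ≤ k) : ¬G.Adj (w 0) (w 1) := by
  rcases (by omega : k = 4 ∨ k = 5 ∨ 6 ≤ k) with hk | hk | hk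
  exacts [S.not_adj_of_card_eq_four hG hk, S.not_adj_of_card_eq_five hG hk,
    S.not_adj_of_six_le_card hG hk]

end IsInducedSquareCycle

theorem SimpleGraph.dist_eq_two_of_square_adj {G : SimpleGraph V} {u v : V}
    (h : (square G).Adj u v) (hn : ¬G.Adj u v) : G.dist u v = 2 := by
  obtain ⟨z, huz, hzv⟩ := h.2.resolve_left hn
  rw [SimpleGraph.dist, edist_eq_two_iff.mpr ⟨h.1, hn, z, huz, hzv.symm⟩]
  rfl

theorem stmt3_general (G : SimpleGraph V) (h6 : _root_.Free G (pathGraph 6)) (hH : _root_.Free G house)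
    (hhole : HoleFree G) (hdom : _root_.Free G domino)
    (k : ℕ) (hk : 4 ≤ k) (v : ZMod k → V) (hinj : Function.Injective v)
    (hadj : ∀ i : ZMod k, (square G).Adj (v i) (v (i + 1)))
    (hnon : ∀ i j : ZMod k, j ≠ i - 1 → j ≠ i → j ≠ i + 1 → ¬ (square G).Adj (v i) (v j)) :
    ∀ i : ZMod k, G.dist (v i) (v (i + 1)) = 2 := by
  intro i
  have hG : IsP6HouseHoleDominoFree G := ⟨h6, hH, hhole, hdom⟩
  have hno : ¬G.Adj (v i) (v (i + 1)) := by
    simpa using (IsInducedSquareCycle.of_zmod hinj hadj hnon i).not_adj_zero_one hG hk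
  exact G.dist_eq_two_of_square_adj (hadj i) hno

theorem stmt3 (G : SimpleGraph V) (h6 : _root_.Free G (pathGraph 6)) (hH : _root_.Free G house)
    (hhole : HoleFree G) (hdom : _root_.Free G domino)
    (D : Set V) (hED : IsEDS G D)
    (k : ℕ) (hk : 4 ≤ k) (v : ZMod k → V) (hinj : Function.Injective v)
    (hadj : ∀ i : ZMod k, (square G).Adj (v i) (v (i + 1)))
    (hnon : ∀ i j : ZMod k, j ≠ i - 1 → j ≠ i → j ≠ i + 1 → ¬ (square G).Adj (v i) (v j)) :
    ∀ i : ZMod k, G.dist (v i) (v (i + 1)) = 2 :=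
  stmt3_general G h6 hH hhole hdom k hk v hinj hadj hnon
end

section
/- Let G be a (P₆, house, hole, domino)-free graph, and suppose G² contains an induced C_k (k ≥ 4) with real vertices v₁,...,v_k all at pairwise G-distance 2 for consecutive vertices, with auxiliary vertices x_i adjacent in G to v_i and v_{i+1}. Then x_i x_{i+1} ∈ E(G) for all i (indices mod k). -/
open SimpleGraph Finset

variable {V : Type*}

/-! If `x i` and `x (i + 1)` were non-adjacent, look at the walk
`v (i-1), x (i-1), v i, x i, v (i+1), x (i+1), v (i+2)`. Real vertices are pairwise non-adjacent
and non-consecutive ones have no common neighbour, so the only adjacencies left open are those of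
`x (i-1)` with `x i`, `x (i+1)` and `v (i+2)`; every choice produces an induced house, `C₅`, `C₆`
or `P₆`. A twin-free graph `H` occurs induced in `G` as soon as some map reflects its adjacency
exactly, which turns each configuration into a finite check. -/

theorem not_free_of_adj_iff {W : Type*} {G : SimpleGraph V} {H : SimpleGraph W}
    (hH : ∀ i j, (∀ l, H.Adj i l ↔ H.Adj j l) → i = j) (f : W → V)
    (hf : ∀ i j, G.Adj (f i) (f j) ↔ H.Adj i j) : ¬ _root_.Free G H :=
  fun h => h.false ⟨⟨f, fun i j hij => hH i j fun l => by rw [← hf, ← hf, hij]⟩, hf _ _⟩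

theorem not_free_of_adj_iff_of_lt {n : ℕ} {G : SimpleGraph V} {H : SimpleGraph (Fin n)}
    (hH : ∀ i j, (∀ l, H.Adj i l ↔ H.Adj j l) → i = j) (f : Fin n → V)
    (hf : ∀ i j, i < j → (G.Adj (f i) (f j) ↔ H.Adj i j)) : ¬ _root_.Free G H := by
  refine not_free_of_adj_iff hH f fun i j => ?_
  rcases lt_trichotomy i j with h | rfl | h
  · exact hf i j h
  · simp
  · rw [G.adj_comm, H.adj_comm]
    exact hf j i h

section Configurations

variable {G : SimpleGraph V} {a b c d e f : V}

theorem not_free_pathGraph_six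
    (hab : G.Adj a b) (hbc : G.Adj b c) (hcd : G.Adj c d) (hde : G.Adj d e) (hef : G.Adj e f)
    (hac : ¬ G.Adj a c) (had : ¬ G.Adj a d) (hae : ¬ G.Adj a e) (haf : ¬ G.Adj a f)
    (hbd : ¬ G.Adj b d) (hbe : ¬ G.Adj b e) (hbf : ¬ G.Adj b f)
    (hce : ¬ G.Adj c e) (hcf : ¬ G.Adj c f) (hdf : ¬ G.Adj d f) :
    ¬ _root_.Free G (pathGraph 6) := by
  refine not_free_of_adj_iff_of_lt (by simp only [pathGraph_adj]; decide) ![a, b, c, d, e, f] ?_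
  intro i j hij
  fin_cases i <;> fin_cases j <;> simp [pathGraph_adj, *] at hij ⊢

theorem not_free_cycleGraph_five
    (hab : G.Adj a b) (hbc : G.Adj b c) (hcd : G.Adj c d) (hde : G.Adj d e) (hae : G.Adj a e)
    (hac : ¬ G.Adj a c) (had : ¬ G.Adj a d) (hbd : ¬ G.Adj b d) (hbe : ¬ G.Adj b e)
    (hce : ¬ G.Adj c e) :
    ¬ _root_.Free G (cycleGraph 5) := by
  refine not_free_of_adj_iff_of_lt (by simp only [cycleGraph_adj]; decide) ![a, b, c, d, e] ?_
  intro i j hij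
  fin_cases i <;> fin_cases j <;> simp [cycleGraph_adj, *] at hij ⊢ <;> decide

theorem not_free_cycleGraph_six
    (hab : G.Adj a b) (hbc : G.Adj b c) (hcd : G.Adj c d) (hde : G.Adj d e) (hef : G.Adj e f)
    (haf : G.Adj a f)
    (hac : ¬ G.Adj a c) (had : ¬ G.Adj a d) (hae : ¬ G.Adj a e)
    (hbd : ¬ G.Adj b d) (hbe : ¬ G.Adj b e) (hbf : ¬ G.Adj b f)
    (hce : ¬ G.Adj c e) (hcf : ¬ G.Adj c f) (hdf : ¬ G.Adj d f) :
    ¬ _root_.Free G (cycleGraph 6) := by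
  refine not_free_of_adj_iff_of_lt (by simp only [cycleGraph_adj]; decide) ![a, b, c, d, e, f] ?_
  intro i j hij
  fin_cases i <;> fin_cases j <;> simp [cycleGraph_adj, *] at hij ⊢ <;> decide

theorem not_free_house
    (hac : G.Adj a c) (had : G.Adj a d) (hae : G.Adj a e) (hbd : G.Adj b d) (hbe : G.Adj b e)
    (hce : G.Adj c e)
    (hab : ¬ G.Adj a b) (hbc : ¬ G.Adj b c) (hcd : ¬ G.Adj c d) (hde : ¬ G.Adj d e) :
    ¬ _root_.Free G house := by
  refine not_free_of_adj_iff_of_lt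
    (by simp only [house, compl_adj, pathGraph_adj]; decide) ![a, b, c, d, e] ?_
  intro i j hij
  fin_cases i <;> fin_cases j <;> simp [house, pathGraph_adj, *] at hij ⊢

end Configurations

section Square

variable {G : SimpleGraph V} {u w y : V}

theorem square_adj_of_adj (h : G.Adj u w) : (square G).Adj u w := ⟨h.ne, Or.inl h⟩

theorem square_adj_of_adj_of_adj (hne : u ≠ w) (huy : G.Adj u y) (hyw : G.Adj y w) :
    (square G).Adj u w :=
  ⟨hne, Or.inr ⟨y, huy, hyw⟩⟩

end Square

theorem adj_of_free_of_square_path {G : SimpleGraph V} (h6 : _root_.Free G (pathGraph 6))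
    (hH : _root_.Free G house) (hC5 : _root_.Free G (cycleGraph 5))
    (hC6 : _root_.Free G (cycleGraph 6)) {v₀ v₁ v₂ v₃ x₀ x₁ x₂ : V}
    (hx₀ : G.Adj v₀ x₀ ∧ G.Adj x₀ v₁) (hx₁ : G.Adj v₁ x₁ ∧ G.Adj x₁ v₂)
    (hx₂ : G.Adj v₂ x₂ ∧ G.Adj x₂ v₃)
    (h₁₂ : ¬ G.Adj v₁ v₂) (h₂₃ : ¬ G.Adj v₂ v₃) (h₀₃ : ¬ G.Adj v₀ v₃)
    (hne₀₂ : v₀ ≠ v₂) (h₀₂ : ¬ (square G).Adj v₀ v₂)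
    (hne₁₃ : v₁ ≠ v₃) (h₁₃ : ¬ (square G).Adj v₁ v₃) :
    G.Adj x₁ x₂ := by
  obtain ⟨hv₀x₀, hx₀v₁⟩ := hx₀
  obtain ⟨hv₁x₁, hx₁v₂⟩ := hx₁
  obtain ⟨hv₂x₂, hx₂v₃⟩ := hx₂
  have hv₀v₂ : ¬ G.Adj v₀ v₂ := fun h => h₀₂ (square_adj_of_adj h)
  have hv₁v₃ : ¬ G.Adj v₁ v₃ := fun h => h₁₃ (square_adj_of_adj h)
  have hx₀v₂ : ¬ G.Adj x₀ v₂ := fun h => h₀₂ (square_adj_of_adj_of_adj hne₀₂ hv₀x₀ h)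
  have hv₀x₁ : ¬ G.Adj v₀ x₁ := fun h => h₀₂ (square_adj_of_adj_of_adj hne₀₂ h hx₁v₂)
  have hv₀x₂ : ¬ G.Adj v₀ x₂ := fun h => h₀₂ (square_adj_of_adj_of_adj hne₀₂ h hv₂x₂.symm)
  have hx₁v₃ : ¬ G.Adj x₁ v₃ := fun h => h₁₃ (square_adj_of_adj_of_adj hne₁₃ hv₁x₁ h)
  have hv₁x₂ : ¬ G.Adj v₁ x₂ := fun h => h₁₃ (square_adj_of_adj_of_adj hne₁₃ h hx₂v₃)
  by_contra hx₁x₂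
  by_cases hx₀x₂ : G.Adj x₀ x₂
  · by_cases hx₀x₁ : G.Adj x₀ x₁
    · refine not_free_house (a := x₁) (b := x₂) (c := v₁) (d := v₂) (e := x₀)
        ?_ ?_ ?_ ?_ ?_ ?_ ?_ ?_ ?_ ?_ hH <;>
        first | assumption | exact .symm ‹_› | exact fun h => absurd h.symm ‹_›
    · refine not_free_cycleGraph_five (a := v₁) (b := x₁) (c := v₂) (d := x₂) (e := x₀)
        ?_ ?_ ?_ ?_ ?_ ?_ ?_ ?_ ?_ ?_ hC5 <;>
        first | assumption | exact .symm ‹_› | exact fun h => absurd h.symm ‹_›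
  by_cases hx₀v₃ : G.Adj x₀ v₃ <;> by_cases hx₀x₁ : G.Adj x₀ x₁
  · refine not_free_cycleGraph_five (a := x₁) (b := v₂) (c := x₂) (d := v₃) (e := x₀)
      ?_ ?_ ?_ ?_ ?_ ?_ ?_ ?_ ?_ ?_ hC5 <;>
      first | assumption | exact .symm ‹_› | exact fun h => absurd h.symm ‹_›
  · refine not_free_cycleGraph_six (a := v₁) (b := x₁) (c := v₂) (d := x₂) (e := v₃) (f := x₀)
      ?_ ?_ ?_ ?_ ?_ ?_ ?_ ?_ ?_ ?_ ?_ ?_ ?_ ?_ ?_ hC6 <;>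
      first | assumption | exact .symm ‹_› | exact fun h => absurd h.symm ‹_›
  · refine not_free_pathGraph_six (a := v₀) (b := x₀) (c := x₁) (d := v₂) (e := x₂) (f := v₃)
      ?_ ?_ ?_ ?_ ?_ ?_ ?_ ?_ ?_ ?_ ?_ ?_ ?_ ?_ ?_ h6 <;> assumption
  · refine not_free_pathGraph_six (a := x₀) (b := v₁) (c := x₁) (d := v₂) (e := x₂) (f := v₃)
      ?_ ?_ ?_ ?_ ?_ ?_ ?_ ?_ ?_ ?_ ?_ ?_ ?_ ?_ ?_ h6 <;> assumption

theorem ZMod.add_two_ne_of_four_le {k : ℕ} (hk : 4 ≤ k) (i : ZMod k) :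
    i + 2 ≠ i - 1 ∧ i + 2 ≠ i ∧ i + 2 ≠ i + 1 := by
  have hcast : ∀ m : ℕ, 0 < m → m < 4 → (m : ZMod k) ≠ 0 := fun m hm hm4 h =>
    absurd (Nat.le_of_dvd hm ((ZMod.natCast_eq_zero_iff m k).mp h)) (by omega)
  have h1 := hcast 1 (by norm_num) (by norm_num)
  have h2 := hcast 2 (by norm_num) (by norm_num)
  have h3 := hcast 3 (by norm_num) (by norm_num)
  push_cast at h1 h2 h3
  exact ⟨fun h => h3 (by linear_combination h), fun h => h2 (by linear_combination h),
    fun h => h1 (by linear_combination h)⟩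

section SquareCycle

variable {G : SimpleGraph V} {k : ℕ} {v : ZMod k → V}

theorem not_adj_of_square_cycle (hd2 : ∀ i : ZMod k, G.dist (v i) (v (i + 1)) = 2)
    (hnon : ∀ i j : ZMod k, j ≠ i - 1 → j ≠ i → j ≠ i + 1 → ¬ (square G).Adj (v i) (v j))
    (i j : ZMod k) : ¬ G.Adj (v i) (v j) := by
  intro h
  by_cases hji : j = i + 1
  · have := hd2 i
    rw [← hji, dist_eq_one_iff_adj.mpr h] at this
    omega
  by_cases hij : i = j + 1
  · have := hd2 j
    rw [← hij, dist_eq_one_iff_adj.mpr h.symm] at this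
    omega
  refine hnon i j (fun h' => hij ?_) (fun h' => h.ne (by rw [h'])) hji (square_adj_of_adj h)
  rw [h', sub_add_cancel]

theorem not_square_adj_add_two (hk : 4 ≤ k)
    (hnon : ∀ i j : ZMod k, j ≠ i - 1 → j ≠ i → j ≠ i + 1 → ¬ (square G).Adj (v i) (v j))
    (i : ZMod k) : ¬ (square G).Adj (v i) (v (i + 2)) :=
  have ⟨h₁, h₂, h₃⟩ := ZMod.add_two_ne_of_four_le hk i
  hnon i (i + 2) h₁ h₂ h₃

end SquareCycle

theorem stmt4_general (G : SimpleGraph V) (h6 : _root_.Free G (pathGraph 6)) (hH : _root_.Free G house)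
    (hhole : HoleFree G)
    (k : ℕ) (hk : 4 ≤ k) (v : ZMod k → V) (hinj : Function.Injective v)
    (hnon : ∀ i j : ZMod k, j ≠ i - 1 → j ≠ i → j ≠ i + 1 → ¬ (square G).Adj (v i) (v j))
    (x : ZMod k → V) (hd2 : ∀ i : ZMod k, G.dist (v i) (v (i + 1)) = 2)
    (hx : ∀ i : ZMod k, G.Adj (v i) (x i) ∧ G.Adj (x i) (v (i + 1))) :
    ∀ i : ZMod k, G.Adj (x i) (x (i + 1)) := by
  intro i
  have hA := not_adj_of_square_cycle hd2 hnon
  have hsq := not_square_adj_add_two hk hnon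
  have hne : ∀ j, v j ≠ v (j + 2) := fun j h =>
    (ZMod.add_two_ne_of_four_le hk j).2.1 (hinj h).symm
  have hprev : i - 1 + 2 = i + 1 := by ring
  have hx₀ := hx (i - 1)
  rw [sub_add_cancel] at hx₀
  have hx₂ := hx (i + 1)
  rw [add_assoc, one_add_one_eq_two] at hx₂
  exact adj_of_free_of_square_path h6 hH (hhole 5 le_rfl) (hhole 6 (by norm_num)) hx₀ (hx i) hx₂
    (hA _ _) (hA _ _) (hA _ _) (hprev ▸ hne (i - 1)) (hprev ▸ hsq (i - 1)) (hne i) (hsq i)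

theorem stmt4 (G : SimpleGraph V) (h6 : _root_.Free G (pathGraph 6)) (hH : _root_.Free G house)
    (hhole : HoleFree G) (hdom : _root_.Free G domino)
    (k : ℕ) (hk : 4 ≤ k) (v : ZMod k → V) (hinj : Function.Injective v)
    (hadj : ∀ i : ZMod k, (square G).Adj (v i) (v (i + 1)))
    (hnon : ∀ i j : ZMod k, j ≠ i - 1 → j ≠ i → j ≠ i + 1 → ¬ (square G).Adj (v i) (v j))
    (x : ZMod k → V) (hd2 : ∀ i : ZMod k, G.dist (v i) (v (i + 1)) = 2)
    (hx : ∀ i : ZMod k, G.Adj (v i) (x i) ∧ G.Adj (x i) (v (i + 1))) :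
    ∀ i : ZMod k, G.Adj (x i) (x (i + 1)) :=
  stmt4_general G h6 hH hhole k hk v hinj hnon x hd2 hx
end

section
/- Let G be a P₆-free graph with efficient dominating set D, and let a ∈ D be a real vertex of an odd antihole C in G². If b, c are co-adjacent real vertices of C with a adjacent to both b and c in G², then exactly one of d_G(a,b), d_G(a,c) equals 1 and the other equals 2. -/
open SimpleGraph Finset

variable {V : Type*}

/-! If `a` were adjacent to neither `b` nor `c`, pick paths `a - x - b` and `a - y - c`, and let
`d`, `e` be the vertices of `D` dominating `b`, `c`. Efficiency keeps `d` and `e` far from the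
closed neighbourhood of `a`, and `b`, `c` have no common neighbour, so `d - b - x - a - y - c`
(or `d - b - x - y - c - e` when `x ~ y`) is an induced `P₆`. Adjacency to both is ruled out
because `b`, `c` are at distance at least 3. -/

namespace SimpleGraph

theorem dist_eq_two_of_square_adj_s17 {G : SimpleGraph V} {u v : V} (h : (square G).Adj u v)
    (hn : ¬ G.Adj u v) : G.dist u v = 2 := by
  obtain ⟨hne, huv | ⟨x, hux, hxv⟩⟩ := h
  · exact absurd huv hn
  rw [dist, ENat.toNat_eq_iff two_ne_zero]
  exact edist_eq_two_iff.mpr ⟨hne, hn, x, hux, hxv.symm⟩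

theorem pathGraph_neighborSet_injective {n : ℕ} (hn : 4 ≤ n) :
    Function.Injective (pathGraph n).neighborSet := by
  intro i j hij
  have key (m : ℕ) (hm : m < n) :
      (i.val + 1 = m ∨ m + 1 = i.val) ↔ (j.val + 1 = m ∨ m + 1 = j.val) := by
    simpa [pathGraph_adj] using Set.ext_iff.mp hij ⟨m, hm⟩
  -- one of `i`, `i ± 1`, `j ± 1` lies in exactly one of the two neighbourhoods
  have := key i i.2
  have := key (i - 1) (by omega)
  have := key (j - 1) (by omega)
  have := fun h => key (i + 1) h
  have := fun h => key (j + 1) h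
  omega

theorem nonempty_embedding_of_adj_iff {W : Type*} {G : SimpleGraph V} {H : SimpleGraph W}
    (hH : Function.Injective H.neighborSet) (f : W → V)
    (hf : ∀ i j, G.Adj (f i) (f j) ↔ H.Adj i j) : Nonempty (H ↪g G) := by
  refine ⟨⟨⟨f, fun i j hij => hH ?_⟩, hf _ _⟩⟩
  ext k
  simp only [mem_neighborSet, ← hf, hij]

theorem nonempty_pathGraph_six_embedding {G : SimpleGraph V} {v₀ v₁ v₂ v₃ v₄ v₅ : V}
    (h₀₁ : G.Adj v₀ v₁) (h₁₂ : G.Adj v₁ v₂) (h₂₃ : G.Adj v₂ v₃) (h₃₄ : G.Adj v₃ v₄)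
    (h₄₅ : G.Adj v₄ v₅) (h₀₂ : ¬ G.Adj v₀ v₂) (h₀₃ : ¬ G.Adj v₀ v₃) (h₀₄ : ¬ G.Adj v₀ v₄)
    (h₀₅ : ¬ G.Adj v₀ v₅) (h₁₃ : ¬ G.Adj v₁ v₃) (h₁₄ : ¬ G.Adj v₁ v₄) (h₁₅ : ¬ G.Adj v₁ v₅)
    (h₂₄ : ¬ G.Adj v₂ v₄) (h₂₅ : ¬ G.Adj v₂ v₅) (h₃₅ : ¬ G.Adj v₃ v₅) :
    Nonempty (pathGraph 6 ↪g G) := by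
  refine nonempty_embedding_of_adj_iff (pathGraph_neighborSet_injective le_add_self)
    ![v₀, v₁, v₂, v₃, v₄, v₅] fun i j => ?_
  fin_cases i <;> fin_cases j <;> simp [pathGraph_adj, G.adj_comm, *]

end SimpleGraph

namespace IsEDS

variable {G : SimpleGraph V} {D : Set V}

theorem eq_of_dominates (hED : IsEDS G D) {d d' v : V} (hd : d ∈ D) (hd' : d' ∈ D)
    (hdv : d = v ∨ G.Adj d v) (hd'v : d' = v ∨ G.Adj d' v) : d = d' :=
  (hED v).unique ⟨hd, hdv⟩ ⟨hd', hd'v⟩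

theorem not_adj_of_dominates (hED : IsEDS G D) {a d v : V} (ha : a ∈ D) (hd : d ∈ D)
    (hda : d ≠ a) (hav : a = v ∨ G.Adj a v) : ¬ G.Adj d v :=
  fun hdv => hda (hED.eq_of_dominates hd ha (Or.inr hdv) hav)

theorem exists_adj_of_square_adj (hED : IsEDS G D) {a b : V} (ha : a ∈ D)
    (hab : (square G).Adj a b) (hnab : ¬ G.Adj a b) : ∃ d ∈ D, d ≠ a ∧ G.Adj d b := by
  obtain ⟨hne, hab | ⟨x, hax, hxb⟩⟩ := hab
  · exact absurd hab hnab
  obtain ⟨d, ⟨hd, rfl | hdb⟩, -⟩ := hED b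
  · exact absurd (hED.eq_of_dominates ha hd (Or.inr hax) (Or.inr hxb.symm)) hne
  · exact ⟨d, hd, fun hda => hnab (hda ▸ hdb), hdb⟩

end IsEDS

theorem adj_or_adj_of_square_adj {G : SimpleGraph V} (h6 : _root_.Free G (pathGraph 6))
    {D : Set V} (hED : IsEDS G D) {a b c : V} (ha : a ∈ D) (hbc : b ≠ c)
    (hnbc : ¬ (square G).Adj b c) (hb : (square G).Adj a b) (hc : (square G).Adj a c) :
    G.Adj a b ∨ G.Adj a c := by
  have hnbc₁ : ¬ G.Adj b c := fun h => hnbc ⟨hbc, Or.inl h⟩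
  have hnbc₂ (w : V) (hbw : G.Adj b w) : ¬ G.Adj w c :=
    fun hwc => hnbc ⟨hbc, Or.inr ⟨w, hbw, hwc⟩⟩
  by_contra! ⟨hab, hac⟩
  obtain ⟨d, hd, hda, hdb⟩ := hED.exists_adj_of_square_adj ha hb hab
  obtain ⟨e, he, hea, hec⟩ := hED.exists_adj_of_square_adj ha hc hac
  obtain ⟨-, hab' | ⟨x, hax, hxb⟩⟩ := hb
  · exact hab hab'
  obtain ⟨-, hac' | ⟨y, hay, hyc⟩⟩ := hc
  · exact hac hac'
  by_cases hxy : G.Adj x y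
  · have hde : d ≠ e := fun hde => hnbc₂ d hdb.symm (hde ▸ hec)
    refine (SimpleGraph.nonempty_pathGraph_six_embedding hdb hxb.symm hxy hyc hec.symm
      (hED.not_adj_of_dominates ha hd hda (Or.inr hax))
      (hED.not_adj_of_dominates ha hd hda (Or.inr hay)) (hnbc₂ d hdb.symm)
      (hED.not_adj_of_dominates he hd hde (Or.inl rfl))
      (fun hby => hnbc₂ y hby hyc) hnbc₁ (fun hbe => hnbc₂ e hbe hec)
      (hnbc₂ x hxb.symm) (fun hxe => hED.not_adj_of_dominates ha he hea (Or.inr hax) hxe.symm)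
      (fun hye => hED.not_adj_of_dominates ha he hea (Or.inr hay) hye.symm)).elim h6.false
  · refine (SimpleGraph.nonempty_pathGraph_six_embedding hdb hxb.symm hax.symm hay hyc
      (hED.not_adj_of_dominates ha hd hda (Or.inr hax))
      (hED.not_adj_of_dominates ha hd hda (Or.inl rfl))
      (hED.not_adj_of_dominates ha hd hda (Or.inr hay)) (hnbc₂ d hdb.symm)
      (fun hba => hab hba.symm) (fun hby => hnbc₂ y hby hyc) hnbc₁ hxy (hnbc₂ x hxb.symm)
      hac).elim h6.false

theorem stmt17 (G : SimpleGraph V) (h6 : _root_.Free G (pathGraph 6))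
    (D : Set V) (hED : IsEDS G D)
    (a b c : V) (ha : a ∈ D) (hbc : b ≠ c) (hbc2 : ¬ (square G).Adj b c)
    (hb : (square G).Adj a b) (hc : (square G).Adj a c) :
    (G.dist a b = 1 ∧ G.dist a c = 2) ∨ (G.dist a b = 2 ∧ G.dist a c = 1) := by
  have hnot_both : ¬ (G.Adj a b ∧ G.Adj a c) :=
    fun ⟨hab, hac⟩ => hbc2 ⟨hbc, Or.inr ⟨a, hab.symm, hac⟩⟩
  rcases adj_or_adj_of_square_adj h6 hED ha hbc hbc2 hb hc with hab | hac
  · exact Or.inl ⟨dist_eq_one_iff_adj.mpr hab,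
      dist_eq_two_of_square_adj_s17 hc fun hac => hnot_both ⟨hab, hac⟩⟩
  · exact Or.inr ⟨dist_eq_two_of_square_adj_s17 hb fun hab => hnot_both ⟨hab, hac⟩,
      dist_eq_one_iff_adj.mpr hac⟩
end
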